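/- Let T be any symmetric 4×4 real matrix. Define the 1+1+2 dynamical variables μ = uᵀTu, κ = −uᵀTn, γ = nᵀTn, α = trace(ηpηT), Q = −pηTu, P = pηTn, and D = pηTηp − (1/2)trace(ηpηT)·p. Then T = μ·ůůᵀ + κ(ůn̊ᵀ + n̊ůᵀ) + (ůQᵀ + Qůᵀ) + γ·n̊n̊ᵀ + (n̊Pᵀ + Pn̊ᵀ) + (α/2)·p + D; moreover Qᵀu = Qᵀn = 0, Pᵀu = Pᵀn = 0, Du = Dn = 0, D = Dᵀ, and trace(ηD) = 0. -/
import Mathlib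

open Matrix

set_option linter.unusedSectionVars false in
section
end

section Helpers
open Matrix
set_option linter.unusedSectionVars false

private lemma vmv_t {m : Type*} [Fintype m] (a b : m → ℝ) :
    (vecMulVec a b)ᵀ = vecMulVec b a := by
  ext i j; simp [vecMulVec_apply, mul_comm]

private lemma mul_vmv {m : Type*} [Fintype m] (A : Matrix m m ℝ) (a b : m → ℝ) :
    A * vecMulVec a b = vecMulVec (A.mulVec a) b := by
  ext i j
  simp [mul_apply, vecMulVec_apply, mulVec, dotProduct, Finset.sum_mul, mul_assoc]

private lemma vmv_mul {m : Type*} [Fintype m] (a b : m → ℝ) (A : Matrix m m ℝ) :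
    vecMulVec a b * A = vecMulVec a (vecMul b A) := by
  ext i j
  simp [mul_apply, vecMulVec_apply, vecMul, dotProduct, Finset.mul_sum, mul_assoc]

private lemma vmv_mulVec {m : Type*} [Fintype m] (a b v : m → ℝ) :
    (vecMulVec a b).mulVec v = (b ⬝ᵥ v) • a := by
  ext i
  simp only [vecMulVec_apply, mulVec, dotProduct, Pi.smul_apply, smul_eq_mul,
    Finset.mul_sum, Finset.sum_mul]
  exact Finset.sum_congr rfl fun k _ => by ring

private lemma vmv_vmv {m : Type*} [Fintype m] (a b c d : m → ℝ) :
    vecMulVec a b * vecMulVec c d = (b ⬝ᵥ c) • vecMulVec a d := by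
  rw [mul_vmv, vmv_mulVec]
  ext i j
  simp [vecMulVec_apply, smul_eq_mul]; ring

private lemma trace_vmv {m : Type*} [Fintype m] (a b : m → ℝ) :
    (vecMulVec a b).trace = a ⬝ᵥ b := by
  simp [trace, diag, vecMulVec_apply, dotProduct]

private lemma vmv_neg {m : Type*} (a b : m → ℝ) :
    vecMulVec a (-b) = -vecMulVec a b := by
  ext i j; simp [vecMulVec_apply]

private lemma vmv_neg_left {m : Type*} (a b : m → ℝ) :
    vecMulVec (-a) b = -vecMulVec a b := by
  ext i j; simp [vecMulVec_apply]

private lemma vmv_smul_left {m : Type*} (c : ℝ) (a b : m → ℝ) :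
    vecMulVec (c • a) b = c • vecMulVec a b := by
  ext i j; simp [vecMulVec_apply]; ring

private lemma vmv_smul_right {m : Type*} (c : ℝ) (a b : m → ℝ) :
    vecMulVec a (c • b) = c • vecMulVec a b := by
  ext i j; simp [vecMulVec_apply]; ring

private lemma vecMul_vmv {m : Type*} [Fintype m] (v a b : m → ℝ) :
    v ᵥ* vecMulVec a b = (v ⬝ᵥ a) • b := by
  ext j
  simp only [vecMulVec_apply, vecMul, dotProduct, Pi.smul_apply, smul_eq_mul,
    Finset.sum_mul]
  exact Finset.sum_congr rfl fun k _ => by ring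

end Helpers

open Matrix in
/-- the 1+1+2 decomposition of a symmetric 2-tensor T with respect
to the double congruence (u, n):
T = μ·ůůᵀ + κ(ůn̊ᵀ + n̊ůᵀ) + (ůQᵀ + Qůᵀ) + γ·n̊n̊ᵀ + (n̊Pᵀ + Pn̊ᵀ) + (α/2)p + D,
with Q, P orthogonal to u and n, and D screen-spatial, symmetric, traceless. -/
theorem stmt_9
    (η : Matrix (Fin 4) (Fin 4) ℝ) (hη : η = Matrix.diagonal ![-1, 1, 1, 1])
    (u n : Fin 4 → ℝ)
    (huu : u ⬝ᵥ η.mulVec u = -1) (hnn : n ⬝ᵥ η.mulVec n = 1)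
    (hun : u ⬝ᵥ η.mulVec n = 0)
    (ul nl : Fin 4 → ℝ) (hul : ul = η.mulVec u) (hnl : nl = η.mulVec n)
    (h p : Matrix (Fin 4) (Fin 4) ℝ)
    (hh : h = η + vecMulVec ul ul) (hp : p = h - vecMulVec nl nl)
    (T : Matrix (Fin 4) (Fin 4) ℝ) (hsymm : Tᵀ = T)
    (μ κ γ α : ℝ) (Q P : Fin 4 → ℝ) (D : Matrix (Fin 4) (Fin 4) ℝ)
    (hμ : μ = u ⬝ᵥ T.mulVec u)
    (hκ : κ = -(u ⬝ᵥ T.mulVec n))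
    (hγ : γ = n ⬝ᵥ T.mulVec n)
    (hα : α = (η * p * η * T).trace)
    (hQ : Q = -(p * η * T).mulVec u)
    (hP : P = (p * η * T).mulVec n)
    (hD : D = p * η * T * η * p - ((1/2) * (η * p * η * T).trace) • p) :
    T = μ • vecMulVec ul ul + κ • (vecMulVec ul nl + vecMulVec nl ul) +
        (vecMulVec ul Q + vecMulVec Q ul) + γ • vecMulVec nl nl +
        (vecMulVec nl P + vecMulVec P nl) + (α / 2) • p + D ∧
      Q ⬝ᵥ u = 0 ∧ Q ⬝ᵥ n = 0 ∧ P ⬝ᵥ u = 0 ∧ P ⬝ᵥ n = 0 ∧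
      D.mulVec u = 0 ∧ D.mulVec n = 0 ∧ Dᵀ = D ∧ (η * D).trace = 0 := by
  -- basic facts about η
  have hηs : ηᵀ = η := by rw [hη]; exact Matrix.diagonal_transpose _
  have hη2 : η * η = 1 := by
    rw [hη]
    ext i j
    fin_cases i <;> fin_cases j <;>
      simp [Matrix.mul_apply, Fin.sum_univ_four, Matrix.one_apply]
  -- symmetric-matrix dot-product swap
  have hsd : ∀ v w : Fin 4 → ℝ, η.mulVec v ⬝ᵥ w = v ⬝ᵥ η.mulVec w := by
    intro v w
    rw [dotProduct_comm, dotProduct_mulVec, ← mulVec_transpose, hηs, dotProduct_comm]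
  -- dot product facts
  have d1 : ul ⬝ᵥ u = -1 := by rw [hul, dotProduct_comm]; exact huu
  have d2 : nl ⬝ᵥ n = 1 := by rw [hnl, dotProduct_comm]; exact hnn
  have d3 : ul ⬝ᵥ n = 0 := by rw [hul, hsd]; exact hun
  have d4 : nl ⬝ᵥ u = 0 := by rw [hnl, dotProduct_comm]; exact hun
  have d5 : u ⬝ᵥ ul = -1 := by rw [hul]; exact huu
  have d6 : n ⬝ᵥ nl = 1 := by rw [hnl]; exact hnn
  -- η lowers/raises
  have hηul : η.mulVec ul = u := by rw [hul, mulVec_mulVec, hη2, Matrix.one_mulVec]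
  have hηnl : η.mulVec nl = n := by rw [hnl, mulVec_mulVec, hη2, Matrix.one_mulVec]
  -- p is symmetric
  have hpt : pᵀ = p := by
    rw [hp, hh, Matrix.transpose_sub, Matrix.transpose_add, vmv_t, vmv_t, hηs]
  -- η * p
  have hEP : η * p = 1 + vecMulVec u ul - vecMulVec n nl := by
    rw [hp, hh, Matrix.mul_sub, Matrix.mul_add, hη2, mul_vmv, mul_vmv, hηul, hηnl]
  -- p annihilates u and n
  have hpu : p.mulVec u = 0 := by
    rw [hp, hh, Matrix.sub_mulVec, Matrix.add_mulVec, vmv_mulVec, vmv_mulVec,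
      d1, d4, ← hul]
    ext i; simp
  have hpn : p.mulVec n = 0 := by
    rw [hp, hh, Matrix.sub_mulVec, Matrix.add_mulVec, vmv_mulVec, vmv_mulVec,
      d3, d2, ← hnl]
    ext i; simp
  -- vecMul by u, n of p is zero
  have hup : vecMul u p = 0 := by rw [← hpt, vecMul_transpose, hpu]
  have hnp : vecMul n p = 0 := by rw [← hpt, vecMul_transpose, hpn]
  -- key mulVec facts
  have hXu : (p * η * T).mulVec u = -Q := by rw [hQ, neg_neg]
  have hXn : (p * η * T).mulVec n = P := hP.symm
  -- vecMul of T*(η*p)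
  have hvTu : vecMul u (T * (η * p)) = -Q := by
    rw [← mulVec_transpose, Matrix.transpose_mul, Matrix.transpose_mul, hηs, hpt,
      hsymm]
    exact hXu
  have hvTn : vecMul n (T * (η * p)) = P := by
    rw [← mulVec_transpose, Matrix.transpose_mul, Matrix.transpose_mul, hηs, hpt,
      hsymm]
    exact hXn
  -- symmetry of T in scalars
  have hnTu : n ⬝ᵥ T.mulVec u = u ⬝ᵥ T.mulVec n := by
    rw [dotProduct_mulVec, ← mulVec_transpose, hsymm, dotProduct_comm]
  -- M = 1
  have hM : η * p - vecMulVec u ul + vecMulVec n nl = 1 := by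
    rw [hEP]; abel
  -- the decomposition
  have hdec : T = μ • vecMulVec ul ul + κ • (vecMulVec ul nl + vecMulVec nl ul) +
      (vecMulVec ul Q + vecMulVec Q ul) + γ • vecMulVec nl nl +
      (vecMulVec nl P + vecMulVec P nl) + (α / 2) • p + D := by
    have expand : (η * p - vecMulVec u ul + vecMulVec n nl)ᵀ * (T *
        (η * p - vecMulVec u ul + vecMulVec n nl)) = T := by
      rw [hM]; simp
    rw [Matrix.transpose_add, Matrix.transpose_sub, Matrix.transpose_mul, hηs, hpt,
      vmv_t, vmv_t] at expand
    rw [Matrix.mul_add, Matrix.mul_sub] at expand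
    rw [Matrix.add_mul, Matrix.sub_mul] at expand
    rw [Matrix.mul_add, Matrix.mul_sub, Matrix.mul_add, Matrix.mul_sub,
      Matrix.mul_add, Matrix.mul_sub] at expand
    simp only [mul_vmv, vmv_mul, vmv_mulVec, vecMul_vmv, mulVec_mulVec,
      vmv_smul_left, vmv_smul_right] at expand
    rw [hvTu, hvTn, hXu, hXn] at expand
    simp only [vmv_neg, vmv_neg_left] at expand
    simp only [← dotProduct_mulVec] at expand
    rw [← hμ, ← hγ] at expand
    have hκ1 : u ⬝ᵥ T.mulVec n = -κ := by rw [hκ, neg_neg]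
    have hκ2 : n ⬝ᵥ T.mulVec u = -κ := by rw [hnTu, hκ1]
    rw [hκ1, hκ2] at expand
    have hPEP : p * η * (T * (η * p)) = D + (α / 2) • p := by
      rw [hD, hα]
      have hhalf : (1 / 2 : ℝ) * (η * p * η * T).trace = (η * p * η * T).trace / 2 := by
        ring
      rw [hhalf]
      simp only [Matrix.mul_assoc]
      abel
    rw [hPEP] at expand
    rw [← expand]
    module
  refine ⟨hdec, ?_, ?_, ?_, ?_, ?_, ?_, ?_, ?_⟩
  · -- Q ⬝ᵥ u = 0
    rw [hQ, neg_dotProduct, dotProduct_comm, dotProduct_mulVec,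
      Matrix.mul_assoc, ← Matrix.vecMul_vecMul, hup]
    simp
  · rw [hQ, neg_dotProduct, dotProduct_comm, dotProduct_mulVec,
      Matrix.mul_assoc, ← Matrix.vecMul_vecMul, hnp]
    simp
  · rw [hP, dotProduct_comm, dotProduct_mulVec,
      Matrix.mul_assoc, ← Matrix.vecMul_vecMul, hup]
    simp
  · rw [hP, dotProduct_comm, dotProduct_mulVec,
      Matrix.mul_assoc, ← Matrix.vecMul_vecMul, hnp]
    simp
  · -- D.mulVec u = 0
    rw [hD, Matrix.sub_mulVec, ← mulVec_mulVec, hpu]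
    simp [Matrix.smul_mulVec, hpu]
  · rw [hD, Matrix.sub_mulVec, ← mulVec_mulVec, hpn]
    simp [Matrix.smul_mulVec, hpn]
  · -- Dᵀ = D
    rw [hD, Matrix.transpose_sub, Matrix.transpose_smul, hpt]
    congr 1
    simp only [Matrix.transpose_mul, hηs, hpt, hsymm, Matrix.mul_assoc]
  · -- trace (η * D) = 0
    have hpηp : p * η * p = p := by
      rw [Matrix.mul_assoc, hEP, Matrix.mul_sub, Matrix.mul_add, Matrix.mul_one,
        mul_vmv, mul_vmv, hpu, hpn]
      have z1 : vecMulVec (0 : Fin 4 → ℝ) ul = 0 := by ext i j; simp [vecMulVec_apply]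
      have z2 : vecMulVec (0 : Fin 4 → ℝ) nl = 0 := by ext i j; simp [vecMulVec_apply]
      rw [z1, z2]; abel
    have htrEP : (η * p).trace = 2 := by
      rw [hEP]
      simp [trace_add, trace_sub, trace_vmv, d5, d6]
      norm_num
    rw [hD, Matrix.mul_sub, trace_sub]
    have h1 : (η * (p * η * T * η * p)).trace = (η * p * η * T).trace := by
      calc (η * (p * η * T * η * p)).trace
          = ((η * (p * η * T * η)) * p).trace := by rw [← Matrix.mul_assoc]
        _ = (p * (η * (p * η * T * η))).trace := trace_mul_comm _ _
        _ = (p * η * p * η * T * η).trace := by simp only [← Matrix.mul_assoc]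
        _ = (p * η * T * η).trace := by rw [hpηp]
        _ = (η * (p * η * T)).trace := trace_mul_comm _ _
        _ = (η * p * η * T).trace := by simp only [← Matrix.mul_assoc]
    rw [h1, Matrix.mul_smul, trace_smul]
    have h2 : (η * p).trace = 2 := htrEP
    rw [show η * p = η * p from rfl]
    rw [smul_eq_mul] at *
    rw [hα] at *
    rw [h2]
    ring
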